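/- Let $1 < p < \infty$ and let $u, v$ be weights on $\mathbb{R}$ such that $(u,v) \in \mathcal{S}_p^{\mathcal{R}}$, and assume that for all $q$ in a nonempty open interval $(p_-, p_+)$ with $p = p_+$ one has $vu^{-q} \in A_q(\mathbb{R})$. Then $\int_{\mathbb{R}}\frac{|f(x)|}{1+|x|}\,dx < \infty$ for every $f$ with $\|f/u\|_{L^{p,1}(\mathbb{R},v)} < \infty$. -/

import Mathlib

open MeasureTheory Real Set
open scoped ENNReal

noncomputable section

/-- A weight on `ℝ`: locally integrable and a.e. positive. -/
def IsWeight (u : ℝ → ℝ) : Prop :=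
  MeasureTheory.LocallyIntegrable u MeasureTheory.volume ∧
    ∀ᵐ x ∂(volume : Measure ℝ), 0 < u x

/-- Hardy–Littlewood maximal operator over intervals containing `x`. -/
def MHL (u : ℝ → ℝ) (x : ℝ) : ℝ≥0∞ :=
  ⨆ I : {I : ℝ × ℝ // I.1 < x ∧ x < I.2},
    ENNReal.ofReal ((∫ t in I.1.1..I.1.2, |u t|) / (I.1.2 - I.1.1))

/-- Muckenhoupt `A₁` class on `ℝ`: `M_{hl} u ≤ C u` a.e. -/
def MemA1 (u : ℝ → ℝ) : Prop :=
  IsWeight u ∧ ∃ C : ℝ, ∀ᵐ x ∂(volume : Measure ℝ), MHL u x ≤ ENNReal.ofReal (C * u x)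

/-- Muckenhoupt `A_p` class on `ℝ` (for `1 < p`), via the interval condition. -/
def MemAp (p : ℝ) (w : ℝ → ℝ) : Prop :=
  IsWeight w ∧ ∃ C : ℝ, ∀ a b : ℝ, a < b →
    ((∫ t in a..b, w t) / (b - a)) *
      (((∫ t in a..b, (w t) ^ (-(1 : ℝ) / (p - 1))) / (b - a)) ^ (p - 1)) ≤ C
open scoped NNReal

/-- An `η`-sparse family of intervals `(a i, b i)` in `ℝ`, with pairwise disjoint
major subsets `E i ⊆ (a i, b i)` of measure at least `η (b i - a i)`. -/
structure SparseFamily (η : ℝ) where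
  ι : Type
  a : ι → ℝ
  b : ι → ℝ
  hab : ∀ i, a i < b i
  E : ι → Set ℝ
  hEmeas : ∀ i, MeasurableSet (E i)
  hEsub : ∀ i, E i ⊆ Set.Ioo (a i) (b i)
  hEbig : ∀ i, ENNReal.ofReal (η * (b i - a i)) ≤ volume (E i)
  hdisj : Pairwise fun i j => Disjoint (E i) (E j)

/-- The sparse operator `𝒜_𝒮 f = ∑_{Q ∈ 𝒮} ⟨f⟩_Q 1_Q`. -/
def sparseOp {η : ℝ} (S : SparseFamily η) (f : ℝ → ℝ) (x : ℝ) : ℝ :=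
  ∑' i : S.ι, Set.indicator (Set.Ioo (S.a i) (S.b i))
    (fun _ => (∫ t in (S.a i)..(S.b i), f t) / (S.b i - S.a i)) x

/-- The `L^p(v dx)` (quasi-)norm of `f`. -/
def LpNorm (p : ℝ) (v f : ℝ → ℝ) : ℝ≥0∞ :=
  (∫⁻ x : ℝ, ENNReal.ofReal (|f x| ^ p * v x)) ^ (1 / p)

/-- Distribution function of `f` with respect to the measure `v dx`. -/
def distrib (v f : ℝ → ℝ) (y : ℝ) : ℝ≥0∞ :=
  ∫⁻ x in {x : ℝ | y < |f x|}, ENNReal.ofReal (v x)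

/-- The Lorentz `L^{p,1}(v dx)` norm `∫_0^∞ λ_f(y)^{1/p} dy`. -/
def Lp1Norm (p : ℝ) (v f : ℝ → ℝ) : ℝ≥0∞ :=
  ∫⁻ y in Set.Ioi (0 : ℝ), (distrib v f y) ^ (1 / p)

/-- The Lorentz `L^{p,∞}(v dx)` norm `sup_{y>0} y λ_f(y)^{1/p}`. -/
def wLpNorm (p : ℝ) (v f : ℝ → ℝ) : ℝ≥0∞ :=
  ⨆ y : {y : ℝ // 0 < y}, ENNReal.ofReal y.1 * (distrib v f y.1) ^ (1 / p)

/-- The class `𝒮_p`: for every sparse family, `f ↦ 𝒜_𝒮(fu)/u` is bounded on `L^p(v)`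
with constant depending only on the sparseness constant. -/
def MemSp (p : ℝ) (u v : ℝ → ℝ) : Prop :=
  ∀ η : ℝ, 0 < η → η < 1 → ∃ C : ℝ≥0, ∀ S : SparseFamily η, ∀ f : ℝ → ℝ,
    LpNorm p v (fun x => sparseOp S (fun t => f t * u t) x / u x) ≤ C * LpNorm p v f

/-- The class `𝒮_p^𝓡`: for every sparse family, `f ↦ 𝒜_𝒮(fu)/u` is bounded from
`L^{p,1}(v)` to `L^{p,∞}(v)` with constant depending only on the sparseness constant. -/
def MemSpR (p : ℝ) (u v : ℝ → ℝ) : Prop :=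
  ∀ η : ℝ, 0 < η → η < 1 → ∃ C : ℝ≥0, ∀ S : SparseFamily η, ∀ f : ℝ → ℝ,
    wLpNorm p v (fun x => sparseOp S (fun t => f t * u t) x / u x) ≤ C * Lp1Norm p v f

section AuxProof

open scoped ENNReal

/-- Choice of a dyadic scale: if `|t| < 2^n` there is `k ≤ n` with `|t| < 2^k ≤ 2(1+|t|)`. -/
lemma aux_find_scale (n : ℕ) (t : ℝ) (ht : |t| < 2 ^ n) :
    ∃ k, k ≤ n ∧ |t| < 2 ^ k ∧ (2:ℝ) ^ k ≤ 2 * (1 + |t|) := by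
  classical
  have hex : ∃ k : ℕ, |t| < (2:ℝ) ^ k := ⟨n, ht⟩
  refine ⟨Nat.find hex, Nat.find_le ht, Nat.find_spec hex, ?_⟩
  rcases Nat.eq_zero_or_pos (Nat.find hex) with h0 | hpos
  · rw [h0, pow_zero]
    nlinarith [abs_nonneg t]
  · obtain ⟨j, hj⟩ := Nat.exists_eq_succ_of_ne_zero hpos.ne'
    have hmin := Nat.find_min hex (show j < Nat.find hex by omega)
    push_neg at hmin
    rw [hj, pow_succ]
    nlinarith [abs_nonneg t]

lemma distrib_mono_abs (v f g : ℝ → ℝ) (h : ∀ x, |f x| ≤ |g x|) (y : ℝ) :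
    distrib v f y ≤ distrib v g y :=
  lintegral_mono_set fun x hx => lt_of_lt_of_le hx (h x)

lemma Lp1Norm_mono_abs (p : ℝ) (hp : 0 < p) (v f g : ℝ → ℝ) (h : ∀ x, |f x| ≤ |g x|) :
    Lp1Norm p v f ≤ Lp1Norm p v g :=
  lintegral_mono fun y => ENNReal.rpow_le_rpow (distrib_mono_abs v f g h y) (by positivity)

lemma ofReal_intervalIntegral_eq (g : ℝ → ℝ) (a b : ℝ) (hab : a ≤ b)
    (hg : MeasureTheory.Integrable g) (hg0 : ∀ t, 0 ≤ g t) :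
    ENNReal.ofReal (∫ t in a..b, g t) = ∫⁻ t in Set.Ioo a b, ENNReal.ofReal (g t) := by
  rw [intervalIntegral.integral_of_le hab,
    MeasureTheory.ofReal_integral_eq_lintegral_ofReal hg.integrableOn
      (Filter.Eventually.of_forall hg0)]
  exact (MeasureTheory.setLIntegral_congr MeasureTheory.Ioo_ae_eq_Ioc).symm

/-- The tower sparse family `{(-2^k, 2^k)}_{k ≤ n}` with sparseness constant `1/4`. -/
def towerFamily (n : ℕ) : SparseFamily (1/4) where
  ι := Fin (n+1)
  a i := -(2:ℝ) ^ (i:ℕ)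
  b i := (2:ℝ) ^ (i:ℕ)
  hab i := by
    have : (0:ℝ) < 2 ^ (i:ℕ) := by positivity
    show -(2:ℝ) ^ (i:ℕ) < (2:ℝ) ^ (i:ℕ)
    linarith
  E i := Set.Ioo ((2:ℝ) ^ (i:ℕ) / 2) ((2:ℝ) ^ (i:ℕ))
  hEmeas i := measurableSet_Ioo
  hEsub i := Set.Ioo_subset_Ioo
    (by have : (0:ℝ) < 2 ^ (i:ℕ) := by positivity
        linarith) le_rfl
  hEbig i := by
    rw [Real.volume_Ioo]
    exact le_of_eq (by congr 1; ring)
  hdisj := by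
    have key : ∀ i j : ℕ, i < j →
        Disjoint (Set.Ioo ((2:ℝ)^i/2) ((2:ℝ)^i)) (Set.Ioo ((2:ℝ)^j/2) ((2:ℝ)^j)) := by
      intro i j hij
      refine Set.disjoint_left.2 fun x hx hx' => ?_
      have h1 : (2:ℝ)^i ≤ (2:ℝ)^j / 2 := by
        rw [le_div_iff₀ (by norm_num : (0:ℝ) < 2)]
        calc (2:ℝ)^i * 2 = 2^(i+1) := by ring
          _ ≤ 2^j := pow_le_pow_right₀ (by norm_num) (by omega)
      exact lt_irrefl x (hx.2.trans_le (h1.trans hx'.1.le))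
    intro i j hij
    have hne : (i:ℕ) ≠ (j:ℕ) := fun h => hij (Fin.ext h)
    rcases lt_or_gt_of_ne hne with h | h
    · exact key _ _ h
    · exact (key _ _ h).symm

lemma sparseOp_towerFamily (n : ℕ) (G : ℝ → ℝ) (x : ℝ) :
    sparseOp (towerFamily n) G x
      = ∑ k ∈ Finset.range (n+1), (Set.Ioo (-(2:ℝ)^k) ((2:ℝ)^k)).indicator
          (fun _ => (∫ t in (-(2:ℝ)^k)..((2:ℝ)^k), G t) / ((2:ℝ)^k - -(2:ℝ)^k)) x := by
  have h0 : sparseOp (towerFamily n) G x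
      = ∑' i : Fin (n+1), (Set.Ioo (-(2:ℝ)^(i:ℕ)) ((2:ℝ)^(i:ℕ))).indicator
          (fun _ => (∫ t in (-(2:ℝ)^(i:ℕ))..((2:ℝ)^(i:ℕ)), G t)
            / ((2:ℝ)^(i:ℕ) - -(2:ℝ)^(i:ℕ))) x := rfl
  rw [h0, tsum_fintype]
  exact Fin.sum_univ_eq_sum_range (fun k => (Set.Ioo (-(2:ℝ)^k) ((2:ℝ)^k)).indicator
    (fun _ => (∫ t in (-(2:ℝ)^k)..((2:ℝ)^k), G t) / ((2:ℝ)^k - -(2:ℝ)^k)) x) (n+1)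

/-- Truncation of `|f|` at height `n` on `(-n, n)`. -/
def trunc (f : ℝ → ℝ) (n : ℕ) : ℝ → ℝ :=
  fun t => (Set.Ioo (-(n:ℝ)) (n:ℝ)).indicator (fun s => min |f s| (n:ℝ)) t

lemma trunc_nonneg (f : ℝ → ℝ) (n : ℕ) (t : ℝ) : 0 ≤ trunc f n t :=
  Set.indicator_nonneg (fun s _ => le_min (abs_nonneg _) (Nat.cast_nonneg _)) t

lemma trunc_le_abs (f : ℝ → ℝ) (n : ℕ) (t : ℝ) : trunc f n t ≤ |f t| := by
  by_cases h : t ∈ Set.Ioo (-(n:ℝ)) (n:ℝ)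
  · rw [trunc, Set.indicator_of_mem h]
    exact min_le_left _ _
  · rw [trunc, Set.indicator_of_notMem h]
    exact abs_nonneg _

lemma trunc_mono (f : ℝ → ℝ) {a b : ℕ} (hab : a ≤ b) (t : ℝ) : trunc f a t ≤ trunc f b t := by
  by_cases h : t ∈ Set.Ioo (-(a:ℝ)) (a:ℝ)
  · have h2 : t ∈ Set.Ioo (-(b:ℝ)) (b:ℝ) := by
      refine ⟨lt_of_le_of_lt (neg_le_neg (by exact_mod_cast hab)) h.1,
        h.2.trans_le (by exact_mod_cast hab)⟩
    simp only [trunc, Set.indicator_of_mem h, Set.indicator_of_mem h2]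
    exact min_le_min le_rfl (by exact_mod_cast hab)
  · simp only [trunc, Set.indicator_of_notMem h]
    exact trunc_nonneg f b t

lemma trunc_measurable {f : ℝ → ℝ} (hf : Measurable f) (n : ℕ) : Measurable (trunc f n) :=
  (hf.abs.min measurable_const).indicator measurableSet_Ioo

lemma trunc_integrable {f : ℝ → ℝ} (hf : Measurable f) (n : ℕ) :
    MeasureTheory.Integrable (trunc f n) := by
  apply MeasureTheory.IntegrableOn.integrable_indicator _ measurableSet_Ioo
  apply MeasureTheory.Measure.integrableOn_of_bounded (M := (n:ℝ))
  · rw [Real.volume_Ioo]; exact ENNReal.ofReal_ne_top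
  · exact (hf.abs.min measurable_const).aestronglyMeasurable
  · refine Filter.Eventually.of_forall fun x => ?_
    rw [Real.norm_eq_abs, abs_of_nonneg (le_min (abs_nonneg _) (Nat.cast_nonneg _))]
    exact min_le_right _ _

end AuxProof

theorem neumann_integral_well_defined_endpoint (p pm : ℝ) (hpm : 1 ≤ pm) (hp : pm < p)
    (u v : ℝ → ℝ) (hu : IsWeight u) (hv : IsWeight v)
    (hAq : ∀ q : ℝ, pm < q → q < p → MemAp q (fun x => v x * u x ^ (-q)))
    (hS : MemSpR p u v) :
    ∀ f : ℝ → ℝ, Measurable f → Lp1Norm p v (fun x => f x / u x) < ⊤ →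
      MeasureTheory.Integrable (fun x => |f x| / (1 + |x|)) := by
  intro f hf hfin
  classical
  have hp0 : (0:ℝ) < p := lt_of_le_of_lt (le_trans zero_le_one hpm) hp
  -- measurable modifications of the weights
  have hum := hu.1.aestronglyMeasurable
  have hvm := hv.1.aestronglyMeasurable
  set u' : ℝ → ℝ := hum.mk u with hu'def
  set v' : ℝ → ℝ := hvm.mk v with hv'def
  have hu'meas : Measurable u' := hum.stronglyMeasurable_mk.measurable
  have hv'meas : Measurable v' := hvm.stronglyMeasurable_mk.measurable
  have huu' : u =ᵐ[volume] u' := hum.ae_eq_mk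
  have hvv' : v =ᵐ[volume] v' := hvm.ae_eq_mk
  -- a set of positive measure in (-1,1) where u is bounded
  obtain ⟨m, hm⟩ : ∃ m : ℕ, volume {x | x ∈ Ioo (-1:ℝ) 1 ∧ u' x < m} ≠ 0 := by
    by_contra h
    push_neg at h
    have h2 : volume (⋃ m : ℕ, {x | x ∈ Ioo (-1:ℝ) 1 ∧ u' x < m}) = 0 :=
      measure_iUnion_null h
    have h3 : (⋃ m : ℕ, {x | x ∈ Ioo (-1:ℝ) 1 ∧ u' x < m}) = Ioo (-1:ℝ) 1 := by
      ext x
      simp only [Set.mem_iUnion, Set.mem_setOf_eq]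
      exact ⟨fun ⟨m, hx, _⟩ => hx, fun hx => (exists_nat_gt (u' x)).imp fun m hm => ⟨hx, hm⟩⟩
    rw [h3, Real.volume_Ioo] at h2
    rw [ENNReal.ofReal_eq_zero] at h2
    linarith
  set F : Set ℝ := {x | x ∈ Ioo (-1:ℝ) 1 ∧ u' x < m} with hFdef
  set c : ℝ := (m:ℝ) + 1 with hcdef
  have hc1 : (1:ℝ) ≤ c := by
    have : (0:ℝ) ≤ (m:ℝ) := Nat.cast_nonneg m
    linarith
  have hc0 : (0:ℝ) < c := lt_of_lt_of_le one_pos hc1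
  -- the v-measure of F is positive
  set δ : ℝ≥0∞ := ∫⁻ x in F, ENNReal.ofReal (v x) with hδdef
  have hδpos : 0 < δ := by
    rw [hδdef]
    have hcongr : (∫⁻ x in F, ENNReal.ofReal (v x)) = ∫⁻ x in F, ENNReal.ofReal (v' x) :=
      lintegral_congr_ae ((ae_restrict_of_ae hvv').mono fun x hx => by dsimp only; rw [hx])
    rw [hcongr, pos_iff_ne_zero]
    intro h0
    have h1 : (fun x => ENNReal.ofReal (v' x)) =ᵐ[volume.restrict F] 0 :=
      (lintegral_eq_zero_iff hv'meas.ennreal_ofReal).1 h0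
    have h2 : ∀ᵐ x ∂(volume : Measure ℝ), 0 < v' x := by
      filter_upwards [hv.2, hvv'] with x ha hb
      rwa [← hb]
    have h3 : ∀ᵐ x ∂(volume : Measure ℝ).restrict F, False := by
      filter_upwards [h1, ae_restrict_of_ae h2] with x hx1 hx2
      have : (0:ℝ≥0∞) < ENNReal.ofReal (v' x) := ENNReal.ofReal_pos.2 hx2
      rw [Pi.zero_apply] at hx1
      exact absurd hx1 this.ne'
    have h4 : (volume : Measure ℝ).restrict F Set.univ = 0 := by
      have := ae_iff.1 h3
      simpa using this
    rw [Measure.restrict_apply_univ] at h4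
    exact hm h4
  set d : ℝ≥0∞ := min δ 1 with hddef
  have hd0 : 0 < d := lt_min hδpos one_pos
  have hdtop : d ≠ ⊤ := ((min_le_right _ _).trans_lt ENNReal.one_lt_top).ne
  have hdp : (0:ℝ≥0∞) < d ^ (1/p) := ENNReal.rpow_pos hd0 hdtop
  have hdptop : d ^ (1/p) ≠ ⊤ := ENNReal.rpow_ne_top_of_nonneg (by positivity) hdtop
  -- the sparse constant
  obtain ⟨C, hC⟩ := hS (1/4) (by norm_num) (by norm_num)
  set B : ℝ≥0∞ := (C:ℝ≥0∞) * Lp1Norm p v (fun x => f x / u x) with hB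
  have hBtop : B ≠ ⊤ := ENNReal.mul_ne_top ENNReal.coe_ne_top hfin.ne
  set Mep : ℝ≥0∞ := B / d ^ (1/p) with hMep
  have hMepTop : Mep ≠ ⊤ := by
    rw [hMep]
    exact (ENNReal.div_lt_top hBtop hdp.ne').ne
  set M : ℝ := 2 * c * Mep.toReal with hM
  have hM0 : (0:ℝ) ≤ M := by
    have := ENNReal.toReal_nonneg (a := Mep)
    nlinarith
  -- the main uniform bound for truncations
  have hmain : ∀ n : ℕ,
      (∫⁻ t, ENNReal.ofReal (trunc f n t / (1 + |t|))) ≤ ENNReal.ofReal (4 * M) := by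
    intro n
    set g : ℝ → ℝ := trunc f n with hg
    set avg : ℕ → ℝ := fun k =>
      (∫ t in (-(2:ℝ)^k)..((2:ℝ)^k), g t) / ((2:ℝ)^k - -(2:ℝ)^k) with havg
    have hlen : ∀ k : ℕ, (0:ℝ) < (2:ℝ)^k - -(2:ℝ)^k := by
      intro k
      have : (0:ℝ) < 2 ^ k := by positivity
      linarith
    have havg0 : ∀ k, 0 ≤ avg k := by
      intro k
      apply div_nonneg _ (hlen k).le
      exact intervalIntegral.integral_nonneg (by linarith [hlen k]) fun t _ => trunc_nonneg f n t
    set T : ℝ := ∑ k ∈ Finset.range (n+1), avg k with hT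
    have hT0 : (0:ℝ) ≤ T := Finset.sum_nonneg fun k _ => havg0 k
    -- Step 1 : T ≤ M via the sparse bound
    have hTM : T ≤ M := by
      rcases eq_or_lt_of_le hT0 with hT0' | hTpos
      · rw [← hT0']; exact hM0
      set y : ℝ := T / (2*c) with hy
      have hy0 : 0 < y := div_pos hTpos (by linarith)
      have hIntcongr : ∀ a b : ℝ,
          (∫ t in a..b, g t / u t * u t) = ∫ t in a..b, g t := by
        intro a b
        apply intervalIntegral.integral_congr_ae
        filter_upwards [hu.2] with t ht
        intro _
        exact div_mul_cancel₀ _ ht.ne'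
      set H : ℝ → ℝ :=
        fun x => sparseOp (towerFamily n) (fun t => g t / u t * u t) x / u x with hH
      have hHF : ∀ᵐ x ∂(volume : Measure ℝ), x ∈ F → y < |H x| := by
        filter_upwards [hu.2, huu'] with x hux hux' hxF
        have hsp : sparseOp (towerFamily n) (fun t => g t / u t * u t) x = T := by
          rw [sparseOp_towerFamily, hT]
          apply Finset.sum_congr rfl
          intro k _
          have hx1 : x ∈ Ioo (-1:ℝ) 1 := hxF.1
          have h2 : (1:ℝ) ≤ 2 ^ k := one_le_pow₀ (by norm_num)
          have hmem : x ∈ Set.Ioo (-(2:ℝ)^k) ((2:ℝ)^k) :=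
            ⟨lt_of_le_of_lt (by linarith) hx1.1, hx1.2.trans_le (by linarith)⟩
          rw [Set.indicator_of_mem hmem, hIntcongr, havg]
        have hHx : H x = T / u x := by
          rw [hH]
          simp only []
          rw [hsp]
        have hux2c : u x < 2 * c := by
          have : u' x < (m:ℝ) := hxF.2
          rw [← hux'] at this
          have : u x < c := by rw [hcdef]; linarith
          linarith
        have hlt : y < T / u x := by
          rw [hy]
          exact div_lt_div_of_pos_left hTpos hux hux2c
        rw [hHx, abs_of_pos (div_pos hTpos hux)]
        exact hlt
      -- distribution bound
      have hdist : d ≤ distrib v H y := by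
        set N : Set ℝ := {x | ¬(x ∈ F → y < |H x|)} with hN
        have hNnull : volume N = 0 := ae_iff.1 hHF
        have hsub : F \ N ⊆ {x | y < |H x|} := fun x hx => not_not.1 hx.2 hx.1
        have hFae : F \ N =ᵐ[volume] F :=
          MeasureTheory.diff_ae_eq_self.2
            (measure_mono_null (Set.inter_subset_right : F ∩ N ⊆ N) hNnull)
        calc d ≤ δ := min_le_left _ _
          _ = ∫⁻ x in F \ N, ENNReal.ofReal (v x) := by
              rw [hδdef]; exact (MeasureTheory.setLIntegral_congr hFae).symm
          _ ≤ ∫⁻ x in {x | y < |H x|}, ENNReal.ofReal (v x) := lintegral_mono_set hsub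
          _ = distrib v H y := rfl
      -- weak type bound
      have hweak : ENNReal.ofReal y * d ^ (1/p) ≤ B := by
        calc ENNReal.ofReal y * d ^ (1/p)
            ≤ ENNReal.ofReal y * (distrib v H y) ^ (1/p) :=
              mul_le_mul_right (ENNReal.rpow_le_rpow hdist (by positivity)) _
          _ ≤ wLpNorm p v H :=
              le_iSup (fun yy : {y : ℝ // 0 < y} =>
                ENNReal.ofReal yy.1 * (distrib v H yy.1) ^ (1/p)) ⟨y, hy0⟩
          _ ≤ C * Lp1Norm p v (fun t => g t / u t) :=
              hC (towerFamily n) (fun t => g t / u t)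
          _ ≤ B := by
              rw [hB]
              refine mul_le_mul_right ?_ _
              refine Lp1Norm_mono_abs p hp0 v _ _ fun x => ?_
              rw [abs_div, abs_div]
              have h1 : |g x| ≤ |f x| := by
                rw [hg, abs_of_nonneg (trunc_nonneg f n x)]
                exact trunc_le_abs f n x
              gcongr
      have hy' : ENNReal.ofReal y ≤ Mep := by
        rw [hMep, ENNReal.le_div_iff_mul_le (Or.inl hdp.ne') (Or.inl hdptop)]
        exact hweak
      have hy'' : y ≤ Mep.toReal := (ENNReal.ofReal_le_iff_le_toReal hMepTop).1 hy'
      have hTy : T = y * (2*c) := by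
        rw [hy]
        field_simp
      rw [hTy, hM]
      nlinarith [hy'', hc0, ENNReal.toReal_nonneg (a := Mep)]
    -- Step 2 : pointwise domination of 1/(1+|t|) by the tower
    have hptw : ∀ t, ENNReal.ofReal (g t / (1 + |t|)) ≤
        ∑ k ∈ Finset.range (n+1), (Set.Ioo (-(2:ℝ)^k) ((2:ℝ)^k)).indicator
          (fun s => ENNReal.ofReal (4 / ((2:ℝ)^k - -(2:ℝ)^k) * g s)) t := by
      intro t
      by_cases ht : t ∈ Set.Ioo (-(n:ℝ)) (n:ℝ)
      · have htn : |t| < (2:ℝ)^n := by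
          have h1 : |t| < (n:ℝ) := abs_lt.2 ⟨ht.1, ht.2⟩
          have h2 : (n:ℝ) ≤ (2:ℝ)^n := by
            exact_mod_cast (Nat.lt_two_pow_self (n := n)).le
          linarith
        obtain ⟨k, hkn, hk1, hk2⟩ := aux_find_scale n t htn
        have hmem : t ∈ Set.Ioo (-(2:ℝ)^k) ((2:ℝ)^k) := Set.mem_Ioo.2 (abs_lt.1 hk1)
        refine le_trans ?_
          (Finset.single_le_sum (f := fun j => (Set.Ioo (-(2:ℝ)^j) ((2:ℝ)^j)).indicator
            (fun s => ENNReal.ofReal (4 / ((2:ℝ)^j - -(2:ℝ)^j) * g s)) t) (a := k)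
            (fun i _ => zero_le) (Finset.mem_range.2 (by omega)))
        show ENNReal.ofReal (g t / (1 + |t|)) ≤ (Set.Ioo (-(2:ℝ)^k) ((2:ℝ)^k)).indicator
          (fun s => ENNReal.ofReal (4 / ((2:ℝ)^k - -(2:ℝ)^k) * g s)) t
        rw [Set.indicator_of_mem hmem]
        apply ENNReal.ofReal_le_ofReal
        have hfrac : 1 / (1 + |t|) ≤ 4 / ((2:ℝ)^k - -(2:ℝ)^k) := by
          rw [div_le_div_iff₀ (by positivity) (hlen k)]
          nlinarith [abs_nonneg t]
        calc g t / (1 + |t|) = g t * (1/(1+|t|)) := by ring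
          _ ≤ g t * (4 / ((2:ℝ)^k - -(2:ℝ)^k)) :=
            mul_le_mul_of_nonneg_left hfrac (trunc_nonneg f n t)
          _ = 4 / ((2:ℝ)^k - -(2:ℝ)^k) * g t := by ring
      · have hg0' : g t = 0 := by
          rw [hg, trunc, Set.indicator_of_notMem ht]
        rw [hg0', zero_div, ENNReal.ofReal_zero]
        exact zero_le
    -- Step 3 : evaluate the lintegral of each tower piece
    have hsum2 : ∀ k ∈ Finset.range (n+1),
        (∫⁻ t, (Set.Ioo (-(2:ℝ)^k) ((2:ℝ)^k)).indicator
          (fun s => ENNReal.ofReal (4 / ((2:ℝ)^k - -(2:ℝ)^k) * g s)) t)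
        = ENNReal.ofReal (4 * avg k) := by
      intro k _
      rw [lintegral_indicator measurableSet_Ioo]
      rw [← ofReal_intervalIntegral_eq _ _ _ (by linarith [hlen k])
        ((trunc_integrable hf n).const_mul _)
        (fun s => mul_nonneg (div_nonneg (by norm_num) (hlen k).le) (trunc_nonneg f n s))]
      rw [intervalIntegral.integral_const_mul]
      congr 1
      simp only [havg]
      ring
    calc (∫⁻ t, ENNReal.ofReal (g t / (1 + |t|)))
        ≤ ∫⁻ t, ∑ k ∈ Finset.range (n+1), (Set.Ioo (-(2:ℝ)^k) ((2:ℝ)^k)).indicator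
            (fun s => ENNReal.ofReal (4 / ((2:ℝ)^k - -(2:ℝ)^k) * g s)) t :=
          lintegral_mono hptw
      _ = ∑ k ∈ Finset.range (n+1), ∫⁻ t, (Set.Ioo (-(2:ℝ)^k) ((2:ℝ)^k)).indicator
            (fun s => ENNReal.ofReal (4 / ((2:ℝ)^k - -(2:ℝ)^k) * g s)) t :=
          lintegral_finset_sum _ fun k _ =>
            (((trunc_measurable hf n).const_mul _).ennreal_ofReal).indicator measurableSet_Ioo
      _ = ∑ k ∈ Finset.range (n+1), ENNReal.ofReal (4 * avg k) := Finset.sum_congr rfl hsum2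
      _ = ENNReal.ofReal (∑ k ∈ Finset.range (n+1), 4 * avg k) :=
          (ENNReal.ofReal_sum_of_nonneg fun k _ => by nlinarith [havg0 k]).symm
      _ = ENNReal.ofReal (4 * T) := by rw [hT, Finset.mul_sum]
      _ ≤ ENNReal.ofReal (4 * M) := ENNReal.ofReal_le_ofReal (by linarith)
  -- monotone convergence
  have hmeasn : ∀ n : ℕ, Measurable fun t => ENNReal.ofReal (trunc f n t / (1 + |t|)) :=
    fun n => ((trunc_measurable hf n).div
      (measurable_const.add measurable_abs)).ennreal_ofReal
  have hmono : Monotone fun n : ℕ => fun t => ENNReal.ofReal (trunc f n t / (1 + |t|)) := by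
    intro a b hab
    intro t
    apply ENNReal.ofReal_le_ofReal
    gcongr
    exact trunc_mono f hab t
  have heq : ∀ t, ENNReal.ofReal (|f t| / (1 + |t|))
      = ⨆ n : ℕ, ENNReal.ofReal (trunc f n t / (1 + |t|)) := by
    intro t
    refine le_antisymm ?_ (iSup_le fun n => ENNReal.ofReal_le_ofReal (by
      gcongr
      exact trunc_le_abs f n t))
    obtain ⟨n, hn⟩ := exists_nat_gt (max |f t| |t|)
    have h1 : |t| < (n:ℝ) := (le_max_right _ _).trans_lt hn
    have h2 : |f t| ≤ (n:ℝ) := ((le_max_left _ _).trans_lt hn).le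
    have h3 : trunc f n t = |f t| := by
      rw [trunc, Set.indicator_of_mem (Set.mem_Ioo.2 (abs_lt.1 h1)), min_eq_left h2]
    exact le_iSup_of_le n (le_of_eq (by rw [h3]))
  have hfin2 : (∫⁻ t, ENNReal.ofReal (|f t| / (1 + |t|))) ≤ ENNReal.ofReal (4 * M) := by
    calc (∫⁻ t, ENNReal.ofReal (|f t| / (1 + |t|)))
        = ∫⁻ t, ⨆ n : ℕ, ENNReal.ofReal (trunc f n t / (1 + |t|)) := lintegral_congr heq
      _ = ⨆ n : ℕ, ∫⁻ t, ENNReal.ofReal (trunc f n t / (1 + |t|)) :=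
          lintegral_iSup hmeasn hmono
      _ ≤ ENNReal.ofReal (4 * M) := iSup_le hmain
  constructor
  · exact (hf.abs.div (measurable_const.add measurable_abs)).aestronglyMeasurable
  · rw [MeasureTheory.hasFiniteIntegral_iff_ofReal
      (Filter.Eventually.of_forall fun x => by positivity)]
    exact lt_of_le_of_lt hfin2 ENNReal.ofReal_lt_top
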